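/- arXiv:1704.02519 — 2 statements merged into one kernel-verified Lean document; each statement's English description precedes it below -/
import Mathlib

section
/- Let $C \in \mathbb{R}^{p\times p}$ be lower triangular with strictly positive diagonal entries, and let $C' = C P$ for a signed permutation matrix $P$. If $C'$ is also lower triangular with strictly positive diagonal entries, then $P = I$ and hence $C' = C$. -/
/-- A signed permutation matrix: each column has exactly one nonzero entry, equal to `1` or `-1`,
with the nonzero rows given by a permutation. -/
def IsSignedPermMatrix {p : ℕ} (P : Matrix (Fin p) (Fin p) ℝ) : Prop :=
  ∃ (σ : Equiv.Perm (Fin p)) (d : Fin p → ℝ), (∀ j, d j = 1 ∨ d j = -1) ∧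
    ∀ i j, P i j = if i = σ j then d j else 0

/-! Column `j` of `C * P` is `d j` times column `σ j` of `C`. Positivity of the diagonal of
`C * P` makes `C j (σ j)` nonzero, so lower triangularity of `C` forces `σ j ≤ j`; an injective
map that never increases is the identity, and then `0 < C j j * d j` leaves only `d j = 1`. -/

theorem Function.Injective.eq_id_of_apply_le {α : Type*} [PartialOrder α] [WellFoundedLT α]
    {f : α → α} (hf : Function.Injective f) (hle : ∀ x, f x ≤ x) : f = id := by
  funext x
  induction x using WellFoundedLT.induction with
  | _ x ih =>
    by_contra hne
    have hlt : f x < x := lt_of_le_of_ne (hle x) hne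
    exact hne (hf (ih (f x) hlt))

theorem Matrix.mul_apply_of_eq_ite {m n o R : Type*} [Fintype n] [DecidableEq n]
    [NonUnitalNonAssocSemiring R] (C : Matrix m n R) {P : Matrix n o R} (σ : o → n) (d : o → R)
    (hP : ∀ i j, P i j = if i = σ j then d j else 0) (i : m) (j : o) :
    (C * P) i j = C i (σ j) * d j := by
  simp [Matrix.mul_apply, hP, mul_ite]

theorem lower_triangular_pos_diag_unique_general (p : ℕ)
    (C C' P : Matrix (Fin p) (Fin p) ℝ)
    (hCtri : ∀ i j : Fin p, i < j → C i j = 0) (hCdiag : ∀ j, 0 < C j j)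
    (hP : IsSignedPermMatrix P) (hC' : C' = C * P)
    (hC'diag : ∀ j, 0 < C' j j) :
    P = 1 ∧ C' = C := by
  obtain ⟨σ, d, hd, hPσ⟩ := hP
  have hC'σ : ∀ i j, C' i j = C i (σ j) * d j := by
    rw [hC']
    exact Matrix.mul_apply_of_eq_ite C σ d hPσ
  have hσle : ∀ j, σ j ≤ j := fun j => not_lt.mp fun hlt => by
    simpa [hC'σ, hCtri j (σ j) hlt] using hC'diag j
  have hσ : ∀ j, σ j = j := congrFun (σ.injective.eq_id_of_apply_le hσle)
  have hd1 : ∀ j, d j = 1 := fun j => (hd j).resolve_right fun hneg => by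
    have := hC'diag j
    rw [hC'σ, hσ, hneg] at this
    linarith [hCdiag j]
  have hP1 : P = 1 := by
    ext i j
    rw [hPσ, hσ, hd1, Matrix.one_apply]
  exact ⟨hP1, by rw [hC', hP1, Matrix.mul_one]⟩

theorem lower_triangular_pos_diag_unique (p : ℕ)
    (C C' P : Matrix (Fin p) (Fin p) ℝ)
    (hCtri : ∀ i j : Fin p, i < j → C i j = 0) (hCdiag : ∀ j, 0 < C j j)
    (hP : IsSignedPermMatrix P) (hC' : C' = C * P)
    (hC'tri : ∀ i j : Fin p, i < j → C' i j = 0) (hC'diag : ∀ j, 0 < C' j j) :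
    P = 1 ∧ C' = C :=
  lower_triangular_pos_diag_unique_general p C C' P hCtri hCdiag hP hC' hC'diag
end

section
/- Let $A, A', C \in \mathbb{R}^{p\times p}$ with $C$ lower triangular, and let $D$ be diagonal with entries in $\{1,-1\}$ satisfying $A' C = A C D$. Fix $j$ and suppose $A'_{:i} = A_{:i}$ for all $i > j$, $C_{jj} \neq 0$, and there exists a row $l$ with $C_{jj} A_{lj} + \sum_{i>j} C_{ij} A_{li} \neq 0$ and $A'_{lj} = A_{lj}$. Then $D_{jj} = 1$ and $A'_{:j} = A_{:j}$. -/
open Finset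

theorem Matrix.mul_apply_of_lower_triangular {n R : Type*} [Fintype n] [LinearOrder n]
    [CommSemiring R] (B C : Matrix n n R) (hC : ∀ i j : n, i < j → C i j = 0) (l j : n) :
    (B * C) l j = C j j * B l j + ∑ i ∈ univ.filter (fun i => j < i), C i j * B l i := by
  rw [Matrix.mul_apply, ← sum_filter_add_sum_filter_not univ (fun i => j < i), add_comm]
  congr 1
  · rw [sum_eq_single_of_mem j (by simp), mul_comm]
    intro i hi hij
    rw [hC i j (lt_of_le_of_ne (not_lt.mp (mem_filter.mp hi).2) hij), mul_zero]
  · exact sum_congr rfl fun i _ => mul_comm _ _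

theorem column_sign_inductive_step_general (p : ℕ)
    (A A' C : Matrix (Fin p) (Fin p) ℝ)
    (hCtri : ∀ i j : Fin p, i < j → C i j = 0)
    (d : Fin p → ℝ)
    (h : A' * C = A * C * Matrix.diagonal d)
    (j : Fin p)
    (hcols : ∀ i : Fin p, j < i → ∀ l, A' l i = A l i)
    (hCjj : C j j ≠ 0)
    (l : Fin p)
    (hl : C j j * A l j + ∑ i ∈ Finset.univ.filter (fun i => j < i), C i j * A l i ≠ 0)
    (hlj : A' l j = A l j) :
    d j = 1 ∧ ∀ l', A' l' j = A l' j := by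
  have hcol : ∀ l', C j j * A' l' j + ∑ i ∈ univ.filter (fun i => j < i), C i j * A l' i =
      (C j j * A l' j + ∑ i ∈ univ.filter (fun i => j < i), C i j * A l' i) * d j := by
    intro l'
    have hl' := congr_fun₂ h l' j
    rw [Matrix.mul_diagonal, Matrix.mul_apply_of_lower_triangular _ _ hCtri,
      Matrix.mul_apply_of_lower_triangular _ _ hCtri] at hl'
    rwa [sum_congr rfl fun i hi => by rw [hcols i (mem_filter.mp hi).2 l']] at hl'
  have hdj : d j = 1 := by
    have hl' := hcol l
    rw [hlj] at hl'
    exact (mul_eq_left₀ hl).mp hl'.symm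
  refine ⟨hdj, fun l' => mul_left_cancel₀ hCjj ?_⟩
  simpa only [hdj, mul_one, add_left_inj] using hcol l'

theorem column_sign_inductive_step (p : ℕ)
    (A A' C : Matrix (Fin p) (Fin p) ℝ)
    (hCtri : ∀ i j : Fin p, i < j → C i j = 0)
    (d : Fin p → ℝ) (hd : ∀ i, d i = 1 ∨ d i = -1)
    (h : A' * C = A * C * Matrix.diagonal d)
    (j : Fin p)
    (hcols : ∀ i : Fin p, j < i → ∀ l, A' l i = A l i)
    (hCjj : C j j ≠ 0)
    (l : Fin p)
    (hl : C j j * A l j + ∑ i ∈ Finset.univ.filter (fun i => j < i), C i j * A l i ≠ 0)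
    (hlj : A' l j = A l j) :
    d j = 1 ∧ ∀ l', A' l' j = A l' j :=
  column_sign_inductive_step_general p A A' C hCtri d h j hcols hCjj l hl hlj
end
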